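/- Let d(s) = exp(sG) be a strictly monotone linear dilation with canonical homogeneous norm ‖·‖_d, let a > 0, and set Ω = { z : 1 ≤ ‖z‖_d < e^a }. Suppose a quantizer q : ℝⁿ → ℝⁿ satisfies q(exp(k·a·G)x) = exp(k·a·G)·q(x) for all k ∈ ℤ, x ∈ ℝⁿ, and ‖q(x) − x‖_d ≤ ε for all x ∈ Ω, where ‖·‖_d here denotes the homogeneous distance ‖q(x) ⊖ x‖_d computed as the homogeneous norm of the Euclidean difference. Then ‖q(x) − x‖_d ≤ ε·‖x‖_d for all x ∈ ℝⁿ \ {0}. -/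

import Mathlib

open Matrix

/-! The dilation `exp (k a G)` maps the shell `1 ≤ ‖·‖_d < e^a` onto `e^{ka} ≤ ‖·‖_d < e^{(k+1)a}`,
scales the homogeneous norm by `e^{ka}`, and commutes with `q`, hence also with `q - id`. Moving `x`
back into the shell by `exp (-k a G)`, the local bound `ε` there becomes `ε e^{ka} ≤ ε ‖x‖_d`. -/

theorem Matrix.exp_smul_mul_exp_neg_smul {m : Type*} [Fintype m] [DecidableEq m]
    (G : Matrix m m ℝ) (s : ℝ) :
    NormedSpace.exp (s • G) * NormedSpace.exp ((-s) • G) = 1 := by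
  rw [← Matrix.exp_add_of_commute _ _ (((Commute.refl G).smul_left _).smul_right _), ← add_smul,
    add_neg_cancel, zero_smul, NormedSpace.exp_zero]

theorem Matrix.exp_smul_mulVec_exp_neg_smul_mulVec {m : Type*} [Fintype m] [DecidableEq m]
    (G : Matrix m m ℝ) (s : ℝ) (v : m → ℝ) :
    NormedSpace.exp (s • G) *ᵥ (NormedSpace.exp ((-s) • G) *ᵥ v) = v := by
  rw [mulVec_mulVec, exp_smul_mul_exp_neg_smul, one_mulVec]

theorem homogeneous_apply_sub_self_of_equivariant {m : Type*} [Fintype m] [DecidableEq m]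
    {G : Matrix m m ℝ} {N : (m → ℝ) → ℝ}
    (hN : ∀ (s : ℝ) (v : m → ℝ), N (NormedSpace.exp (s • G) *ᵥ v) = Real.exp s * N v)
    {q : (m → ℝ) → (m → ℝ)} {s : ℝ} {y : m → ℝ}
    (hq : q (NormedSpace.exp (s • G) *ᵥ y) = NormedSpace.exp (s • G) *ᵥ q y) :
    N (q (NormedSpace.exp (s • G) *ᵥ y) - NormedSpace.exp (s • G) *ᵥ y)
      = Real.exp s * N (q y - y) := by
  rw [hq, ← mulVec_sub, hN]

theorem local_to_global_sector_bound_general {n : ℕ} (G : Matrix (Fin n) (Fin n) ℝ)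
    (a ε : ℝ) (hε : 0 ≤ ε)
    (hnorm : (Fin n → ℝ) → ℝ)
    (hscale : ∀ (s : ℝ) (v : Fin n → ℝ),
      hnorm ((NormedSpace.exp (s • G)).mulVec v) = Real.exp s * hnorm v)
    (hproj : ∀ x : Fin n → ℝ, x ≠ 0 → ∃ k : ℤ,
      1 ≤ hnorm ((NormedSpace.exp ((-(k * a)) • G)).mulVec x) ∧
      hnorm ((NormedSpace.exp ((-(k * a)) • G)).mulVec x) < Real.exp a)
    (q : (Fin n → ℝ) → (Fin n → ℝ))
    (hqcomm : ∀ (k : ℤ) (x : Fin n → ℝ),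
      q ((NormedSpace.exp ((k * a) • G)).mulVec x) =
        (NormedSpace.exp ((k * a) • G)).mulVec (q x))
    (hlocal : ∀ x : Fin n → ℝ,
      1 ≤ hnorm x → hnorm x < Real.exp a → hnorm (q x - x) ≤ ε) :
    ∀ x : Fin n → ℝ, x ≠ 0 → hnorm (q x - x) ≤ ε * hnorm x := by
  intro x hx
  obtain ⟨k, hlow, hhigh⟩ := hproj x hx
  set y := NormedSpace.exp ((-(k * a)) • G) *ᵥ x
  have hyx : NormedSpace.exp ((k * a) • G) *ᵥ y = x := exp_smul_mulVec_exp_neg_smul_mulVec G _ x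
  have herr : hnorm (q x - x) = Real.exp (k * a) * hnorm (q y - y) :=
    hyx ▸ homogeneous_apply_sub_self_of_equivariant hscale (hqcomm k y)
  have hx_norm : hnorm x = Real.exp (k * a) * hnorm y := hyx ▸ hscale _ y
  rw [herr, hx_norm]
  calc Real.exp (k * a) * hnorm (q y - y)
      ≤ Real.exp (k * a) * ε := by gcongr; exact hlocal y hlow hhigh
    _ ≤ ε * (Real.exp (k * a) * hnorm y) := by
      rw [mul_comm]; exact mul_le_mul_of_nonneg_left (le_mul_of_one_le_right (by positivity) hlow) hε

/-- Upgrading a local quantization-error bound on the fundamental domain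
`Ω = {z : 1 ≤ ‖z‖_d < e^a}` to a global sector bound, using discrete homogeneity
of the quantizer: if `q(exp(kaG)x) = exp(kaG) q(x)` and `‖q(x) − x‖_d ≤ ε` on `Ω`,
then `‖q(x) − x‖_d ≤ ε ‖x‖_d` for all `x ≠ 0`. -/
theorem local_to_global_sector_bound {n : ℕ} (G : Matrix (Fin n) (Fin n) ℝ)
    (a ε : ℝ) (ha : 0 < a) (hε : 0 ≤ ε)
    (hnorm : (Fin n → ℝ) → ℝ)
    (hscale : ∀ (s : ℝ) (v : Fin n → ℝ),
      hnorm ((NormedSpace.exp (s • G)).mulVec v) = Real.exp s * hnorm v)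
    (hproj : ∀ x : Fin n → ℝ, x ≠ 0 → ∃ k : ℤ,
      1 ≤ hnorm ((NormedSpace.exp ((-(k * a)) • G)).mulVec x) ∧
      hnorm ((NormedSpace.exp ((-(k * a)) • G)).mulVec x) < Real.exp a)
    (q : (Fin n → ℝ) → (Fin n → ℝ))
    (hqcomm : ∀ (k : ℤ) (x : Fin n → ℝ),
      q ((NormedSpace.exp ((k * a) • G)).mulVec x) =
        (NormedSpace.exp ((k * a) • G)).mulVec (q x))
    (hlocal : ∀ x : Fin n → ℝ,
      1 ≤ hnorm x → hnorm x < Real.exp a → hnorm (q x - x) ≤ ε) :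
    ∀ x : Fin n → ℝ, x ≠ 0 → hnorm (q x - x) ≤ ε * hnorm x :=
  local_to_global_sector_bound_general G a ε hε hnorm hscale hproj q hqcomm hlocal
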